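/- arXiv:1409.3887 — 3 statements merged into one kernel-verified Lean document; each statement's English description precedes it below -/
import Mathlib

section
/- A homeomorphism f of a compact metric space X is continuum-wise expansive if and only if f is partially expansive with central dimension D = 0. -/
open Metric Set

variable {X : Type*} [MetricSpace X]

/-- mesh of a family of sets is < ε -/
def MeshLT (𝒰 : Set (Set X)) (ε : ℝ) : Prop := ∀ A ∈ 𝒰, Metric.diam A < ε

/-- the order of a family of sets is ≤ n : every subfamily with more than n+1
elements has empty intersection -/
def OrdLE (𝒰 : Set (Set X)) (n : ℕ) : Prop :=
  ∀ 𝒱 : Finset (Set X), ↑𝒱 ⊆ 𝒰 → n + 1 < 𝒱.card → ⋂₀ (𝒱 : Set (Set X)) = ∅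

/-- the ε-dimension of Y is ≤ n -/
def DimEpsLE (Y : Set X) (ε : ℝ) (n : ℕ) : Prop :=
  ∃ 𝒰 : Set (Set X), (∀ A ∈ 𝒰, IsOpen A) ∧ Y ⊆ ⋃₀ 𝒰 ∧ MeshLT 𝒰 ε ∧ OrdLE 𝒰 n

/-- the ε-dimension of Y, as an extended natural number -/
noncomputable def dimEps (Y : Set X) (ε : ℝ) : ℕ∞ :=
  sInf {d : ℕ∞ | ∃ n : ℕ, d = n ∧ DimEpsLE Y ε n}

/-- the topological (covering) dimension of Y, as lim_{ε→0} dim_ε Y -/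
noncomputable def topDim (Y : Set X) : ℕ∞ :=
  ⨆ (ε : ℝ) (_ : 0 < ε), dimEps Y ε

/-- dim Y > D, for an integer D ≥ -1 (nonempty sets have dimension ≥ 0 > -1) -/
def DimGT (Y : Set X) (D : ℤ) : Prop := D < 0 ∨ ((D.toNat : ℕ∞) < topDim Y)

/-- the n-th iterate (n ∈ ℤ) of a homeomorphism -/
def hiter (f : X ≃ₜ X) (n : ℤ) : X → X := ⇑(f.toEquiv ^ n)

/-- partially expansive with central dimension D and expansive constant ε -/
def PartiallyExpansive (f : X ≃ₜ X) (D : ℤ) (ε : ℝ) : Prop :=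
  ∀ C : Set X, IsCompact C → C.Nontrivial → DimGT C D →
    ∃ k : ℤ, ε ≤ Metric.diam (hiter f k '' C)
/-- f is continuum-wise expansive with cw-expansive constant δ -/
def CwExpansiveWith {X : Type*} [MetricSpace X] (f : X ≃ₜ X) (δ : ℝ) : Prop :=
  ∀ C : Set X, IsCompact C → IsConnected C →
    (∀ n : ℤ, Metric.diam (hiter f n '' C) < δ) → ∃ x : X, C = {x}

/-! A compact set has positive dimension exactly when it contains a nontrivial continuum, so both
notions say that a compact set all of whose iterates are small is degenerate. A preconnected set
containing `x` and `y` lies inside a single member of any disjoint open cover, so it has no such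
cover of mesh `dist x y`. Conversely a compact totally disconnected set splits into finitely many
disjoint clopen pieces of small diameter, and thin enough thickenings of these pieces form a
disjoint open cover of small mesh. -/

open Filter Topology Function

theorem ordLE_zero_iff_pairwiseDisjoint {α : Type*} {𝒰 : Set (Set α)} :
    OrdLE 𝒰 0 ↔ 𝒰.PairwiseDisjoint id := by
  classical
  constructor
  · intro h A hA B hB hAB
    have hcard : 0 + 1 < ({A, B} : Finset (Set α)).card := by
      rw [Finset.card_pair hAB]; norm_num
    have := h {A, B} (by simp [Set.insert_subset_iff, hA, hB]) hcard
    simpa [Set.disjoint_iff_inter_eq_empty] using this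
  · intro h 𝒱 h𝒱 hcard
    obtain ⟨A, hA, B, hB, hAB⟩ := Finset.one_lt_card.mp (by omega : 1 < 𝒱.card)
    exact Set.subset_empty_iff.mp fun x hx =>
      Set.disjoint_left.mp (h (h𝒱 hA) (h𝒱 hB) hAB) (hx A hA) (hx B hB)

theorem DimEpsLE.mono {Y Z : Set X} {ε : ℝ} {n : ℕ} (hYZ : Y ⊆ Z) (h : DimEpsLE Z ε n) :
    DimEpsLE Y ε n :=
  let ⟨𝒰, hopen, hcover, hmesh, hord⟩ := h
  ⟨𝒰, hopen, hYZ.trans hcover, hmesh, hord⟩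

theorem dimEps_eq_zero_iff {Y : Set X} {ε : ℝ} : dimEps Y ε = 0 ↔ DimEpsLE Y ε 0 := by
  refine ⟨fun h => ?_, fun h => nonpos_iff_eq_zero.mp (sInf_le ⟨0, rfl, h⟩)⟩
  have hne : {d : ℕ∞ | ∃ n : ℕ, d = n ∧ DimEpsLE Y ε n}.Nonempty := by
    by_contra hempty
    simp [dimEps, Set.not_nonempty_iff_eq_empty.mp hempty] at h
  obtain ⟨n, hn, hdim⟩ := csInf_mem hne
  change dimEps Y ε = n at hn
  obtain rfl : n = 0 := by exact_mod_cast (h ▸ hn).symm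
  exact hdim

theorem dimGT_zero_iff {Y : Set X} : DimGT Y 0 ↔ ∃ ε > 0, ¬ DimEpsLE Y ε 0 := by
  simp only [DimGT, topDim, lt_iSup_iff]
  simp [pos_iff_ne_zero, dimEps_eq_zero_iff]

theorem dimEpsLE_zero_of_pairwise_disjoint_isCompact {ι : Type*} [Finite ι] {K : ι → Set X}
    (hK : ∀ i, IsCompact (K i)) (hdisj : Pairwise (Disjoint on K)) {ε : ℝ}
    (hdiam : ∀ i, diam (K i) < ε) {Y : Set X} (hY : Y ⊆ ⋃ i, K i) : DimEpsLE Y ε 0 := by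
  have hsep : ∀ᶠ t in 𝓝[>] (0 : ℝ), ∀ i j, i ≠ j →
      Disjoint (thickening t (K i)) (thickening t (K j)) := by
    refine eventually_all.2 fun i => eventually_all.2 fun j => ?_
    by_cases hij : i = j
    · exact .of_forall fun _ h => absurd hij h
    obtain ⟨d, hd, hdisj_d⟩ := (hdisj hij).exists_thickenings (hK i) (hK j).isClosed
    filter_upwards [Ioo_mem_nhdsGT hd] with t ht _
    exact hdisj_d.mono (thickening_mono ht.2.le _) (thickening_mono ht.2.le _)
  have hsmall : ∀ᶠ t in 𝓝[>] (0 : ℝ), ∀ i, diam (K i) + 2 * t < ε := by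
    refine eventually_all.2 fun i => ?_
    have : Tendsto (fun t : ℝ => diam (K i) + 2 * t) (𝓝[>] 0) (𝓝 (diam (K i))) :=
      tendsto_nhdsWithin_of_tendsto_nhds (Continuous.tendsto' (by fun_prop) 0 _ (by simp))
    exact this.eventually (gt_mem_nhds (hdiam i))
  obtain ⟨t, ⟨hsep, hsmall⟩, ht⟩ := ((hsep.and hsmall).and self_mem_nhdsWithin).exists
  refine ⟨range fun i => thickening t (K i), ?_, ?_, ?_, ?_⟩
  · rintro _ ⟨i, rfl⟩
    exact isOpen_thickening
  · exact hY.trans fun x hx =>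
      let ⟨i, hi⟩ := mem_iUnion.1 hx
      ⟨_, ⟨i, rfl⟩, self_subset_thickening ht _ hi⟩
  · rintro _ ⟨i, rfl⟩
    exact ((diam_thickening_le _ ht.le).trans_lt (hsmall i))
  · rw [ordLE_zero_iff_pairwiseDisjoint]
    rintro _ ⟨i, rfl⟩ _ ⟨j, rfl⟩ hne
    exact hsep i j fun hij => hne (hij ▸ rfl)

theorem IsCompact.exists_pairwise_disjoint_cover_diam_le {C : Set X} (hC : IsCompact C)
    (htd : IsTotallyDisconnected C) {ε : ℝ} (hε : 0 < ε) :
    ∃ (n : ℕ) (K : Fin n → Set X), (∀ i, IsCompact (K i)) ∧ Pairwise (Disjoint on K) ∧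
      (∀ i, diam (K i) ≤ ε) ∧ C ⊆ ⋃ i, K i := by
  have : CompactSpace C := isCompact_iff_compactSpace.mp hC
  have : TotallyDisconnectedSpace C := totallyDisconnectedSpace_subtype_iff.mpr htd
  have hnear : {p : X × X | dist p.1 p.2 < ε} ∈ 𝓝ˢ (diagonal X) :=
    (isOpen_lt continuous_dist continuous_const).mem_nhdsSet.mpr fun p (hp : p.1 = p.2) => by
      simpa [hp] using hε
  obtain ⟨n, D, -, hDsmall, hDcover, hDdisj⟩ :=
    (ContinuousMap.mk ((↑) : C → X) continuous_subtype_val)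
      |>.exists_disjoint_nonempty_clopen_cover_of_mem_nhds_diagonal hnear
  refine ⟨n, fun i => (↑) '' (D i : Set C), fun i => ?_, fun i j hij => ?_, fun i => ?_, ?_⟩
  · exact (D i).isClopen.isClosed.isCompact.image continuous_subtype_val
  · exact disjoint_image_of_injective Subtype.val_injective
      (TopologicalSpace.Clopens.coe_disjoint.mpr (hDdisj hij))
  · refine diam_le_of_forall_dist_le hε.le ?_
    rintro _ ⟨y, hy, rfl⟩ _ ⟨z, hz, rfl⟩
    exact (hDsmall i y hy z hz).le
  · intro x hx
    obtain ⟨i, hi⟩ := mem_iUnion.mp (hDcover (mem_univ ⟨x, hx⟩))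
    exact mem_iUnion.mpr ⟨i, ⟨x, hx⟩, hi, rfl⟩

theorem IsCompact.dimEpsLE_zero_of_isTotallyDisconnected {C : Set X} (hC : IsCompact C)
    (htd : IsTotallyDisconnected C) {ε : ℝ} (hε : 0 < ε) : DimEpsLE C ε 0 := by
  obtain ⟨n, K, hK, hdisj, hdiam, hcover⟩ :=
    hC.exists_pairwise_disjoint_cover_diam_le htd (half_pos hε)
  exact dimEpsLE_zero_of_pairwise_disjoint_isCompact hK hdisj
    (fun i => (hdiam i).trans_lt (half_lt_self hε)) hcover

theorem IsPreconnected.subset_of_ordLE_zero {α : Type*} [TopologicalSpace α] {C A : Set α}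
    {𝒰 : Set (Set α)} (hC : IsPreconnected C) (hopen : ∀ U ∈ 𝒰, IsOpen U) (hcover : C ⊆ ⋃₀ 𝒰)
    (hord : OrdLE 𝒰 0) (hA : A ∈ 𝒰) (hCA : (C ∩ A).Nonempty) : C ⊆ A := by
  have hdisj := ordLE_zero_iff_pairwiseDisjoint.mp hord
  refine hC.subset_left_of_subset_union (hopen A hA)
    (isOpen_sUnion (s := 𝒰 \ {A}) fun U hU => hopen U hU.1)
    (disjoint_sUnion_right.mpr fun U (hU : U ∈ 𝒰 \ {A}) => hdisj hA hU.1 (Ne.symm hU.2)) ?_ hCA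
  intro x hx
  obtain ⟨U, hU, hxU⟩ := hcover hx
  by_cases hUA : U = A
  · exact Or.inl (hUA ▸ hxU)
  · exact Or.inr ⟨U, ⟨hU, hUA⟩, hxU⟩

theorem IsPreconnected.not_dimEpsLE_zero [BoundedSpace X] {C : Set X} (hC : IsPreconnected C)
    {x y : X} (hx : x ∈ C) (hy : y ∈ C) : ¬ DimEpsLE C (dist x y) 0 := by
  rintro ⟨𝒰, hopen, hcover, hmesh, hord⟩
  obtain ⟨A, hA, hxA⟩ := hcover hx
  have hCA := hC.subset_of_ordLE_zero hopen hcover hord hA ⟨x, hx, hxA⟩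
  exact (dist_le_diam_of_mem (Bornology.IsBounded.all A) (hCA hx) (hCA hy)).not_gt (hmesh A hA)

theorem IsCompact.dimGT_zero_iff_exists_continuum [BoundedSpace X] {C : Set X}
    (hC : IsCompact C) :
    DimGT C 0 ↔ ∃ K ⊆ C, IsCompact K ∧ IsConnected K ∧ K.Nontrivial := by
  constructor
  · rw [dimGT_zero_iff]
    rintro ⟨ε, hε, hdim⟩
    by_contra! hK
    refine hdim (hC.dimEpsLE_zero_of_isTotallyDisconnected (fun t htC ht => ?_) hε)
    rcases t.eq_empty_or_nonempty with rfl | hne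
    · exact subsingleton_empty
    have hclC : closure t ⊆ C := closure_minimal htC hC.isClosed
    have := hK _ hclC (hC.of_isClosed_subset isClosed_closure hclC) ⟨hne.closure, ht.closure⟩
    exact this.anti subset_closure
  · rintro ⟨K, hKC, -, hK, x, hx, y, hy, hxy⟩
    exact dimGT_zero_iff.mpr ⟨dist x y, dist_pos.mpr hxy,
      fun h => hK.isPreconnected.not_dimEpsLE_zero hx hy (h.mono hKC)⟩

/-- A homeomorphism of a compact metric space is cw-expansive iff it is partially
expansive with central dimension D = 0. -/
theorem cwExpansive_iff_partiallyExpansive_zero {X : Type*} [MetricSpace X]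
    [CompactSpace X] (f : X ≃ₜ X) :
    (∃ δ : ℝ, 0 < δ ∧ CwExpansiveWith f δ) ↔
      (∃ ε : ℝ, 0 < ε ∧ PartiallyExpansive f 0 ε) := by
  constructor
  · rintro ⟨δ, hδ, hcw⟩
    refine ⟨δ, hδ, fun C hC _ hdim => ?_⟩
    by_contra! hsmall
    obtain ⟨K, hKC, hK, hKconn, hKnt⟩ := hC.dimGT_zero_iff_exists_continuum.mp hdim
    obtain ⟨x, rfl⟩ := hcw K hK hKconn fun n =>
      (diam_mono (image_mono hKC) (Bornology.IsBounded.all _)).trans_lt (hsmall n)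
    exact not_nontrivial_singleton hKnt
  · rintro ⟨ε, hε, hpe⟩
    refine ⟨ε, hε, fun C hC hconn hsmall => ?_⟩
    refine hconn.nonempty.exists_eq_singleton_or_nontrivial.resolve_right fun hCnt => ?_
    obtain ⟨k, hk⟩ := hpe C hC hCnt
      (hC.dimGT_zero_iff_exists_continuum.mpr ⟨C, subset_rfl, hC, hconn, hCnt⟩)
    exact (hsmall k).not_ge hk
end

section
/- Every dw-expansive homeomorphism of a compact metric space is partially expansive with the same central dimension. -/
open Metric Set

variable {X : Type*} [MetricSpace X]

/-- f is dw-expansive with central dimension D and dw-expansive constant σ -/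
def DwExpansive {X : Type*} [MetricSpace X] (f : X ≃ₜ X) (D : ℕ) (σ : ℝ) : Prop :=
  ∀ C : Set X, IsCompact C → (D : ℕ∞) < topDim C →
    ∃ n : ℤ, (D : ℕ∞) < dimEps (hiter f n '' C) σ

/-- If a set has small diameter, its σ-dimension is ≤ 0. -/
lemma dimEpsLE_zero_of_diam_lt {Y : Set X} {σ : ℝ} (hσ : 0 < σ)
    (hd : Metric.diam Y < σ) : DimEpsLE Y σ 0 := by
  obtain ⟨δ, hδ0, hδ⟩ : ∃ δ : ℝ, 0 < δ ∧ Metric.diam Y + 2 * δ < σ := by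
    refine ⟨(σ - Metric.diam Y) / 3, by linarith, by linarith⟩
  refine ⟨{Metric.thickening δ Y}, ?_, ?_, ?_, ?_⟩
  · rintro A rfl; exact Metric.isOpen_thickening
  · intro x hx
    exact ⟨Metric.thickening δ Y, rfl, Metric.self_subset_thickening hδ0 Y hx⟩
  · rintro A rfl
    calc Metric.diam (Metric.thickening δ Y) ≤ Metric.diam Y + 2 * δ :=
          Metric.diam_thickening_le Y hδ0.le
      _ < σ := hδ
  · intro 𝒱 h𝒱 hcard
    exfalso
    have : 𝒱.card ≤ 1 := Finset.card_le_one.2 (by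
      intro a ha b hb
      have := h𝒱 ha; have := h𝒱 hb
      simp_all)
    omega

/-- Every dw-expansive homeomorphism is partially expansive with the same central
dimension (and the same constant). -/
theorem dwExpansive_partiallyExpansive {X : Type*} [MetricSpace X] [CompactSpace X]
    (f : X ≃ₜ X) (D : ℕ) (σ : ℝ) (hσ : 0 < σ) (h : DwExpansive f D σ) :
    PartiallyExpansive f (D : ℤ) σ := by
  intro C hC hnt hgt
  have hD : (D : ℕ∞) < topDim C := by
    rcases hgt with h1 | h2
    · omega
    · simpa using h2
  obtain ⟨n, hn⟩ := h C hC hD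
  refine ⟨n, ?_⟩
  by_contra hlt
  push_neg at hlt
  have h0 : dimEps (hiter f n '' C) σ ≤ 0 :=
    sInf_le ⟨0, by simp, dimEpsLE_zero_of_diam_lt hσ hlt⟩
  have : (D : ℕ∞) < 0 := lt_of_lt_of_le hn h0
  simp at this
end

section
/- Let f : X → X be a homeomorphism of a compact metric space, R an f-invariant equivalence relation (R(f(x)) = f(R(x)) for all x), and suppose f is expansive mod R. If for some ε > 0 we have dim(R_ε(x)) ≤ D for all x ∈ X, then f is partially expansive with central dimension D. -/
open Metric Set

variable {X : Type*} [MetricSpace X]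

/-- The ε-plaque of x: connected component of x in B_ε(x) ∩ R(x). -/
def plaque {X : Type*} [MetricSpace X] (r : X → X → Prop) (ε : ℝ) (x : X) : Set X :=
  connectedComponentIn (Metric.ball x ε ∩ {y | r x y}) x

/-- An (ε,R)-orbit of f. -/
def IsEpsROrbit {X : Type*} [MetricSpace X] (f : X ≃ₜ X) (r : X → X → Prop)
    (ε : ℝ) (u : ℤ → X) : Prop :=
  ∀ n : ℤ, f (u n) ∈ plaque r ε (u (n + 1))

/-- f is expansive mod the equivalence relation R. -/
def ExpansiveModR {X : Type*} [MetricSpace X] (f : X ≃ₜ X) (r : X → X → Prop) : Prop :=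
  ∀ ε : ℝ, 0 < ε → ∃ δ : ℝ, 0 < δ ∧ ∀ u v : ℤ → X,
    IsEpsROrbit f r ε u → IsEpsROrbit f r ε v →
    (∀ n : ℤ, dist (u n) (v n) < δ) → ∀ n : ℤ, u n ∈ plaque r ε (v n)

lemma dimEps_mono' {Y Z : Set X} (h : Y ⊆ Z) (ε : ℝ) : dimEps Y ε ≤ dimEps Z ε := by
  apply sInf_le_sInf
  rintro d ⟨n, rfl, 𝒰, h1, h2, h3, h4⟩
  exact ⟨n, rfl, 𝒰, h1, h.trans h2, h3, h4⟩

lemma topDim_mono' {Y Z : Set X} (h : Y ⊆ Z) : topDim Y ≤ topDim Z :=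
  iSup₂_mono fun ε _ => dimEps_mono' h ε

/-- If f is expansive mod an f-invariant equivalence relation R and all ε-plaques
have dimension ≤ D for some ε > 0, then f is partially expansive with central
dimension D. -/
theorem expansiveModR_partiallyExpansive {X : Type*} [MetricSpace X] [CompactSpace X]
    (f : X ≃ₜ X) (r : X → X → Prop) (hequiv : Equivalence r)
    (hinv : ∀ x y : X, r x y ↔ r (f x) (f y))
    (hexp : ExpansiveModR f r) (D : ℕ)
    (hdim : ∃ ε : ℝ, 0 < ε ∧ ∀ x : X, topDim (plaque r ε x) ≤ (D : ℕ∞)) :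
    ∃ δ : ℝ, 0 < δ ∧ PartiallyExpansive f (D : ℤ) δ := by
  obtain ⟨ε, hε, hplaque⟩ := hdim
  obtain ⟨δ, hδ, hδexp⟩ := hexp ε hε
  refine ⟨δ, hδ, ?_⟩
  intro C hC hCnt hCdim
  by_contra hcon
  push_neg at hcon
  obtain ⟨y, hy, -, -, -⟩ := hCnt
  have horb : ∀ z : X, IsEpsROrbit f r ε (fun n => hiter f n z) := by
    intro z n
    have hmul : f.toEquiv ^ (n + 1) = f.toEquiv * f.toEquiv ^ n := by
      rw [add_comm, zpow_add, zpow_one]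
    have hstep : f (hiter f n z) = hiter f (n + 1) z := by
      simp [hiter, hmul, Equiv.Perm.mul_apply]
    simp only [hstep]
    exact mem_connectedComponentIn ⟨Metric.mem_ball_self hε, hequiv.refl _⟩
  have key : C ⊆ plaque r ε y := by
    intro x hx
    have hdist : ∀ n : ℤ, dist (hiter f n x) (hiter f n y) < δ := by
      intro n
      have h1 : hiter f n x ∈ hiter f n '' C := ⟨x, hx, rfl⟩
      have h2 : hiter f n y ∈ hiter f n '' C := ⟨y, hy, rfl⟩
      calc dist (hiter f n x) (hiter f n y)
          ≤ Metric.diam (hiter f n '' C) :=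
            Metric.dist_le_diam_of_mem Metric.isBounded_of_compactSpace h1 h2
        _ < δ := hcon n
    have := hδexp _ _ (horb x) (horb y) hdist 0
    simpa [hiter] using this
  have h1 : topDim C ≤ (D : ℕ∞) := (topDim_mono' key).trans (hplaque y)
  rcases hCdim with h | h
  · exact absurd h (by omega)
  · rw [Int.toNat_natCast] at h
    exact absurd (h.trans_le h1) (lt_irrefl _)
end
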